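/- arXiv:2503.09240 — 2 statements merged into one kernel-verified Lean document; each statement's English description precedes it below -/
import Mathlib

section
/- Let F be an SSAF of shape α with basement σ, and let F' be obtained by deleting all non-basement 1-cells, with β the shape of F'. Then for every pair ℓ < r with α_ℓ ≥ α_r and β_ℓ < β_r, we have α_r = β_r and σ(ℓ) < σ(r). -/
/-!
Columns of an SSAF weakly decrease upwards, so `β i` counts an initial segment of column `i`:
for `1 ≤ m ≤ α i`, `m ≤ β i ↔ 2 ≤ F i m`. With `m = β ℓ + 1 ≤ β r ≤ α r ≤ α ℓ` this gives
`F ℓ m = 1 < F r m`. A type A triple through rows `i` and `i + 1` turns `F ℓ (i + 1) < F r (i + 1)`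
into `F ℓ i < F r i`; descending from row `m` to the basement gives `σ ℓ < σ r`. The same triple
at the top row of column `r`, where `F ℓ (α r) = 1`, forbids `F r (α r) = 1`, hence `α r = β r`.
-/

/-- A semi-skyline augmented filling of shape `α` with basement `σ`.
Entries are positive naturals; `σ i` as a value in `[n]` is `(σ i : ℕ) + 1`.
Conditions: positivity, basement, no descents, type A and type B inversion triples. -/
def IsSSAF (n : ℕ) (α : Fin n → ℕ) (σ : Equiv.Perm (Fin n)) (F : Fin n → ℕ → ℕ) : Prop :=
  (∀ i j, j ≤ α i → 1 ≤ F i j) ∧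
  (∀ i, F i 0 = (σ i : ℕ) + 1) ∧
  (∀ i j, j + 1 ≤ α i → F i (j + 1) ≤ F i j) ∧
  (∀ ℓ r : Fin n, ∀ i : ℕ, ℓ < r → α r ≤ α ℓ → i + 1 ≤ α r →
    ¬ (F ℓ (i + 1) ≤ F r (i + 1) ∧ F r (i + 1) ≤ F ℓ i)) ∧
  (∀ ℓ r : Fin n, ∀ i : ℕ, ℓ < r → α ℓ < α r → i ≤ α ℓ → i + 1 ≤ α r →
    ¬ (F r (i + 1) ≤ F ℓ i ∧ F ℓ i ≤ F r i))

/-- The shape obtained by deleting all non-basement cells with entry `1`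
(entries weakly decrease up a column, so such cells sit at the top):
`shapeDel α F i` is the number of non-basement cells of column `i` with entry at least `2`. -/
def shapeDel (n : ℕ) (α : Fin n → ℕ) (F : Fin n → ℕ → ℕ) (i : Fin n) : ℕ :=
  ((Finset.Icc 1 (α i)).filter (fun j => 2 ≤ F i j)).card

open Finset

theorem le_card_filter_Icc_iff {f : ℕ → ℕ} {a t m : ℕ} (hf : AntitoneOn f (Set.Iic a))
    (hm : 1 ≤ m) (hma : m ≤ a) : m ≤ #{j ∈ Icc 1 a | t ≤ f j} ↔ t ≤ f m := by
  constructor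
  · intro hcard
    by_contra! hfm
    have hsub : {j ∈ Icc 1 a | t ≤ f j} ⊆ Icc 1 (m - 1) := by
      intro j hj
      simp only [mem_filter, mem_Icc] at hj ⊢
      refine ⟨hj.1.1, ?_⟩
      by_contra! hmj
      have := hf (show m ∈ Set.Iic a from hma) (show j ∈ Set.Iic a from hj.1.2) (by omega)
      omega
    have := card_le_card hsub
    simp only [Nat.card_Icc] at this
    omega
  · intro hfm
    calc m = #(Icc 1 m) := by simp
      _ ≤ #{j ∈ Icc 1 a | t ≤ f j} := card_le_card fun j hj => by
        simp only [mem_filter, mem_Icc] at hj ⊢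
        exact ⟨⟨hj.1, hj.2.trans hma⟩,
          hfm.trans (hf (show j ∈ Set.Iic a from hj.2.trans hma) hma hj.2)⟩

theorem shapeDel_le {n : ℕ} (α : Fin n → ℕ) (F : Fin n → ℕ → ℕ) (i : Fin n) :
    shapeDel n α F i ≤ α i :=
  (card_filter_le _ _).trans (by simp)

namespace IsSSAF

variable {n : ℕ} {α : Fin n → ℕ} {σ : Equiv.Perm (Fin n)} {F : Fin n → ℕ → ℕ}

theorem antitoneOn (hF : IsSSAF n α σ F) (i : Fin n) : AntitoneOn (F i) (Set.Iic (α i)) :=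
  antitoneOn_of_succ_le Set.ordConnected_Iic fun j _ _ hj => hF.2.2.1 i j hj

theorem le_shapeDel_iff (hF : IsSSAF n α σ F) {i : Fin n} {m : ℕ} (hm : 1 ≤ m) (hma : m ≤ α i) :
    m ≤ shapeDel n α F i ↔ 2 ≤ F i m :=
  le_card_filter_Icc_iff (hF.antitoneOn i) hm hma

section TypeA

variable (hF : IsSSAF n α σ F) {ℓ r : Fin n} (hlr : ℓ < r) (hα : α r ≤ α ℓ)
include hF hlr hα

theorem lt_of_lt_succ {i : ℕ} (hi : i + 1 ≤ α r) (h : F ℓ (i + 1) < F r (i + 1)) :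
    F ℓ i < F r i := by
  have htriple := hF.2.2.2.1 ℓ r i hlr hα hi
  have hdec := hF.2.2.1 r i hi
  omega

theorem lt_of_lt_of_le {i k : ℕ} (hk : k ≤ α r) (h : F ℓ k < F r k) (hik : i ≤ k) :
    F ℓ i < F r i := by
  induction k with
  | zero => rwa [Nat.le_zero.mp hik]
  | succ k ih =>
    rcases hik.eq_or_lt with rfl | hik
    · exact h
    · exact ih (by omega) (hF.lt_of_lt_succ hlr hα hk h) (by omega)

theorem two_le_of_le_one {k : ℕ} (hk : 1 ≤ k) (hkr : k ≤ α r) (h : F ℓ k ≤ 1) :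
    2 ≤ F r k := by
  obtain ⟨i, rfl⟩ : ∃ i, k = i + 1 := ⟨k - 1, by omega⟩
  have htriple := hF.2.2.2.1 ℓ r i hlr hα hkr
  have hℓ := hF.1 ℓ (i + 1) (hkr.trans hα)
  have hℓ' := hF.1 ℓ i (by omega)
  have hr := hF.1 r (i + 1) hkr
  omega

end TypeA

end IsSSAF

theorem stmt5 (n : ℕ) (α : Fin n → ℕ) (σ : Equiv.Perm (Fin n)) (F : Fin n → ℕ → ℕ)
    (hF : IsSSAF n α σ F) (ℓ r : Fin n) (hlr : ℓ < r) (hα : α r ≤ α ℓ)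
    (hβ : shapeDel n α F ℓ < shapeDel n α F r) :
    α r = shapeDel n α F r ∧ (σ ℓ : ℕ) < (σ r : ℕ) := by
  have hβr := shapeDel_le α F r
  set m := shapeDel n α F ℓ + 1
  have hmr : m ≤ α r := by omega
  have hFℓ : F ℓ m < 2 := by
    rw [← not_le, ← hF.le_shapeDel_iff (by omega) (hmr.trans hα)]
    omega
  have hFr : 2 ≤ F r m := (hF.le_shapeDel_iff (by omega) hmr).1 hβ
  constructor
  · have htop : F ℓ (α r) ≤ 1 := by
      have := hF.antitoneOn ℓ (show m ∈ Set.Iic (α ℓ) from hmr.trans hα)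
        (show α r ∈ Set.Iic (α ℓ) from hα) hmr
      omega
    have := hF.two_le_of_le_one hlr hα (by omega) le_rfl htop
    exact le_antisymm ((hF.le_shapeDel_iff (by omega) le_rfl).2 this) hβr
  · have := hF.lt_of_lt_of_le hlr hα hmr (by omega) (Nat.zero_le m)
    rw [hF.2.1, hF.2.1] at this
    omega
end

section
/- For a weak composition α of length n and σ ∈ S_n, the atom satisfies the branching formula 𝒜_α^σ(x_1,...,x_n) = Σ_{β_{(1)} ⋖_σ α} x_1^{|α|−|β_{(1)}|} · 𝒜_{β_{(1)}}^{σ_1}(x_2,...,x_n), where the sum is over weak compositions β_{(1)} of length n−1 covered by α in the poset ≤_σ. -/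
/-- `β` is `σ`-extendable to `α` (Definition 3.3). -/
def SigmaExtendable (n : ℕ) (σ : Equiv.Perm (Fin n)) (β α : Fin n → ℕ) : Prop :=
  (∀ i, β i ≤ α i) ∧
  ∀ ℓ r : Fin n, ℓ < r →
    (α r ≤ α ℓ → β r ≤ β ℓ → α r ≤ β ℓ) ∧
    (α ℓ < α r → β ℓ < β r → α ℓ < β r) ∧
    (α r ≤ α ℓ → β ℓ < β r → α r = β r ∧ (σ ℓ : ℕ) < (σ r : ℕ)) ∧
    (α ℓ < α r → β r ≤ β ℓ → α ℓ = β ℓ ∧ (σ r : ℕ) < (σ ℓ : ℕ))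

/-- The set of SSAFs of shape `α` with basement `σ`, with fillings normalized
to be `0` outside the cells of the diagram. -/
def SSAFSet (n : ℕ) (α : Fin n → ℕ) (σ : Equiv.Perm (Fin n)) : Set (Fin n → ℕ → ℕ) :=
  {F | IsSSAF n α σ F ∧ ∀ i j, α i < j → F i j = 0}

/-- The permuted-basement Demazure atom `𝒜_α^σ`, as a sum of monomial weights
over SSAFs of shape `α` with basement `σ`; `x j` is the variable `x_j`. -/
noncomputable def atomSum (n : ℕ) (α : Fin n → ℕ) (σ : Equiv.Perm (Fin n)) (x : ℕ → ℝ) : ℝ :=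
  ∑ᶠ F ∈ SSAFSet n α σ, ∏ i : Fin n, ∏ j ∈ Finset.Icc 1 (α i), x (F i j)

/-!
In every column of an SSAF the entries weakly decrease upwards, and the basement of column
`σ⁻¹ 0` is `1`, so that column consists of `1`s and in every other column the entries `≥ 2`
form an initial segment. Deleting the `1`s, lowering the remaining entries by one and dropping
column `σ⁻¹ 0` gives an SSAF of shape `β₁` with basement `σ₁`; the deleted cells contribute
`x₁^(|α| - |β₁|)`. For the lowered filling `H = F - 1` the deleted cells are the zeros; the
inversion-triple conditions of `H` for the shape `α` force `β` to be `σ`-extendable to `α`, and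
once it is, they are equivalent to those for the shape `β`. Each of these implications propagates
a comparison between two columns row by row until it contradicts the basement or a zero of `H`.
-/

section Triples

variable {ι κ : Type*}

/-- The last two clauses of `IsSSAF`, for an arbitrary shape `α`. -/
structure NoInversionTriples [LT ι] (α : ι → ℕ) (F : ι → ℕ → ℕ) : Prop where
  typeA : ∀ ℓ r i, ℓ < r → α r ≤ α ℓ → i + 1 ≤ α r →
    ¬ (F ℓ (i + 1) ≤ F r (i + 1) ∧ F r (i + 1) ≤ F ℓ i)
  typeB : ∀ ℓ r i, ℓ < r → α ℓ < α r → i ≤ α ℓ → i + 1 ≤ α r →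
    ¬ (F r (i + 1) ≤ F ℓ i ∧ F ℓ i ≤ F r i)

namespace NoInversionTriples

theorem comp_strictMono [Preorder ι] [Preorder κ] {α : ι → ℕ} {F : ι → ℕ → ℕ}
    (h : NoInversionTriples α F) {e : κ → ι} (he : StrictMono e) :
    NoInversionTriples (α ∘ e) (F ∘ e) :=
  ⟨fun ℓ r i hlr => h.typeA (e ℓ) (e r) i (he hlr),
    fun ℓ r i hlr => h.typeB (e ℓ) (e r) i (he hlr)⟩

variable [LT ι] {α : ι → ℕ} {H : ι → ℕ → ℕ} {ℓ r : ι}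

/-! A triple condition moves a comparison between columns `ℓ` and `r` one row down or up. -/

theorem descend_typeA (h : NoInversionTriples α H) (hr : Antitone (H r)) (hlr : ℓ < r)
    (hα : α r ≤ α ℓ) (i : ℕ) (hi : i + 1 ≤ α r) (hle : H ℓ (i + 1) ≤ H r (i + 1)) :
    H ℓ 0 < H r 0 := by
  induction i with
  | zero => exact (not_le.mp fun h' => h.typeA ℓ r 0 hlr hα hi ⟨hle, h'⟩).trans_le (hr (by omega))
  | succ i ih =>
    have hlt : H ℓ (i + 1) < H r (i + 2) :=
      not_le.mp fun h' => h.typeA ℓ r (i + 1) hlr hα hi ⟨hle, h'⟩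
    exact ih (by omega) (hlt.le.trans (hr (by omega)))

theorem descend_typeB (h : NoInversionTriples α H) (hl : Antitone (H ℓ)) (hlr : ℓ < r)
    (hα : α ℓ < α r) (i : ℕ) (hi : i ≤ α ℓ) (hi1 : i + 1 ≤ α r)
    (hle : H r (i + 1) ≤ H ℓ i) : H r 0 < H ℓ 0 := by
  induction i with
  | zero => exact not_le.mp fun h' => h.typeB ℓ r 0 hlr hα hi hi1 ⟨hle, h'⟩
  | succ i ih =>
    have hlt : H r (i + 1) < H ℓ (i + 1) :=
      not_le.mp fun h' => h.typeB ℓ r (i + 1) hlr hα hi hi1 ⟨hle, h'⟩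
    exact ih (by omega) (by omega) (hlt.le.trans (hl (by omega)))

theorem ascend_typeA (h : NoInversionTriples α H) (hr : Antitone (H r)) (hlr : ℓ < r)
    (hα : α r ≤ α ℓ) (t : ℕ) (ht : t + 1 ≤ α r) (hle : H r (t + 1) ≤ H ℓ t) :
    H r (α r) < H ℓ (α r) := by
  induction h' : α r - (t + 1) generalizing t with
  | zero =>
    rw [show α r = t + 1 by omega]
    exact not_le.mp fun h' => h.typeA ℓ r t hlr hα ht ⟨h', hle⟩
  | succ d ih =>
    have hlt : H r (t + 1) < H ℓ (t + 1) :=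
      not_le.mp fun h' => h.typeA ℓ r t hlr hα ht ⟨h', hle⟩
    exact ih (t + 1) (by omega) ((hr (by omega)).trans hlt.le) (by omega)

theorem ascend_typeB (h : NoInversionTriples α H) (hl : Antitone (H ℓ)) (hlr : ℓ < r)
    (hα : α ℓ < α r) (t : ℕ) (ht : t ≤ α ℓ) (hle : H ℓ t ≤ H r t) :
    H ℓ (α ℓ) < H r (α ℓ + 1) := by
  induction h' : α ℓ - t generalizing t with
  | zero =>
    obtain rfl : α ℓ = t := by omega
    exact not_le.mp fun h' => h.typeB ℓ r (α ℓ) hlr hα le_rfl hα ⟨h', hle⟩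
  | succ d ih =>
    have hlt : H ℓ t < H r (t + 1) :=
      not_le.mp fun h' => h.typeB ℓ r t hlr hα ht (by omega) ⟨h', hle⟩
    exact ih (t + 1) (by omega) ((hl (by omega)).trans hlt.le) (by omega)

end NoInversionTriples

end Triples

/-- An SSAF with every entry lowered by one (the paper's `F` with its `1`s removed): the positive
cells above the basement form the diagram of `β`, and the basement holds `σ i`. -/
structure IsLoweredFilling {m : ℕ} (β : Fin m → ℕ) (σ : Equiv.Perm (Fin m))
    (H : Fin m → ℕ → ℕ) : Prop where
  base : ∀ i, H i 0 = σ i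
  antitone : ∀ i, Antitone (H i)
  pos_iff : ∀ i j, 0 < j → (0 < H i j ↔ j ≤ β i)

namespace IsLoweredFilling

variable {m : ℕ} {α β : Fin m → ℕ} {σ : Equiv.Perm (Fin m)} {H : Fin m → ℕ → ℕ}

theorem eq_zero_of_lt (hH : IsLoweredFilling β σ H) {i : Fin m} {j : ℕ} (h : β i < j) :
    H i j = 0 :=
  Nat.eq_zero_of_not_pos fun hpos => absurd ((hH.pos_iff i j (by omega)).mp hpos) (by omega)

theorem pos_of_le (hH : IsLoweredFilling β σ H) {i : Fin m} {j : ℕ} (hj : 0 < j)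
    (h : j ≤ β i) : 0 < H i j :=
  (hH.pos_iff i j hj).mpr h

theorem apply_eq_zero (hH : IsLoweredFilling β σ H) {p : Fin m} (hp : (σ p : ℕ) = 0) :
    H p = 0 :=
  funext fun j => Nat.eq_zero_of_le_zero <| (hH.antitone p (Nat.zero_le j)).trans_eq <| by
    rw [hH.base, hp]

theorem shape_eq_zero (hH : IsLoweredFilling β σ H) {p : Fin m} (hp : (σ p : ℕ) = 0) :
    β p = 0 := by
  have := (hH.pos_iff p 1 one_pos).not
  rw [hH.apply_eq_zero hp] at this
  simpa using this

theorem sigmaExtendable (hH : IsLoweredFilling β σ H) (hβα : ∀ i, β i ≤ α i)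
    (h : NoInversionTriples α H) : SigmaExtendable m σ β α := by
  refine ⟨hβα, fun ℓ r hlr =>
    ⟨fun hα hβ => ?_, fun hα hβ => ?_, fun hα hβ => ?_, fun hα hβ => ?_⟩⟩
  -- A failing shape inequality gives a triple in the row just above `β ℓ` or `β r`, where `H`
  -- vanishes; the basement inequalities come from descending from that row.
  · by_contra! hlt
    refine h.typeA ℓ r (β ℓ) hlr hα hlt ⟨?_, ?_⟩ <;>
      simp [hH.eq_zero_of_lt (lt_add_one (β ℓ)),
        hH.eq_zero_of_lt (j := β ℓ + 1) (i := r) (by omega)]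
  · by_contra! hle
    refine h.typeB ℓ r (β r) hlr hα hle (by omega) ⟨?_, ?_⟩ <;>
      simp [hH.eq_zero_of_lt (lt_add_one (β r)), hH.eq_zero_of_lt (i := ℓ) hβ]
  · have hαβ : α r = β r := by
      by_contra! hne
      refine h.typeA ℓ r (β r) hlr hα (by have := hβα r; omega) ⟨?_, ?_⟩ <;>
        simp [hH.eq_zero_of_lt (lt_add_one (β r)),
          hH.eq_zero_of_lt (j := β r + 1) (i := ℓ) (by omega)]
    refine ⟨hαβ, ?_⟩
    have := h.descend_typeA (hH.antitone r) hlr hα (β ℓ) (by omega)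
      (by simp [hH.eq_zero_of_lt (lt_add_one (β ℓ))])
    rwa [hH.base, hH.base] at this
  · have hαβ : α ℓ = β ℓ := by
      by_contra! hne
      refine h.typeB ℓ r (β ℓ + 1) hlr hα (by have := hβα ℓ; omega) (by have := hβα ℓ; omega)
        ⟨?_, ?_⟩ <;>
        simp [hH.eq_zero_of_lt (lt_add_one (β ℓ)),
          hH.eq_zero_of_lt (j := β ℓ + 1 + 1) (i := r) (by omega)]
    refine ⟨hαβ, ?_⟩
    have := h.descend_typeB (hH.antitone ℓ) hlr hα (β r) (by omega) (by omega)
      (by simp [hH.eq_zero_of_lt (lt_add_one (β r))])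
    rwa [hH.base, hH.base] at this

theorem noInversionTriples_of_outer (hH : IsLoweredFilling β σ H)
    (hext : SigmaExtendable m σ β α) (h : NoInversionTriples α H) : NoInversionTriples β H := by
  constructor
  · intro ℓ r i hlr hβ hi hcontra
    rcases le_or_gt (α r) (α ℓ) with hα | hα
    · exact h.typeA ℓ r i hlr hα (hi.trans (hext.1 r)) hcontra
    · obtain ⟨hαβ, -⟩ := (hext.2 ℓ r hlr).2.2.2 hα hβ
      have := h.ascend_typeB (hH.antitone ℓ) hlr hα (i + 1) (by omega) hcontra.1
      rw [hH.eq_zero_of_lt (i := r) (j := α ℓ + 1) (by omega)] at this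
      exact Nat.not_lt_zero _ this
  · intro ℓ r i hlr hβ hi hi1 hcontra
    rcases lt_or_ge (α ℓ) (α r) with hα | hα
    · exact h.typeB ℓ r i hlr hα (hi.trans (hext.1 ℓ)) (hi1.trans (hext.1 r)) hcontra
    · obtain ⟨hαβ, -⟩ := (hext.2 ℓ r hlr).2.2.1 hα hβ
      have := h.ascend_typeA (hH.antitone r) hlr hα i (by omega) hcontra.1
      rw [hH.eq_zero_of_lt (i := ℓ) (j := α r) (by omega)] at this
      exact Nat.not_lt_zero _ this

theorem noInversionTriples_of_inner (hH : IsLoweredFilling β σ H)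
    (hext : SigmaExtendable m σ β α) (h : NoInversionTriples β H) : NoInversionTriples α H := by
  constructor
  · intro ℓ r i hlr hα hi ⟨hle, hge⟩
    obtain ⟨hαr, -, hσ, -⟩ := hext.2 ℓ r hlr
    rcases le_or_gt (β r) (β ℓ) with hβ | hβ
    · by_cases hir : i + 1 ≤ β r
      · exact h.typeA ℓ r i hlr hβ hir ⟨hle, hge⟩
      · have := hH.pos_of_le (i := ℓ) (j := i + 1) (by omega) (hi.trans (hαr hα hβ))
        rw [hH.eq_zero_of_lt (not_le.mp hir)] at hle
        omega
    · obtain ⟨hαβ, hσ⟩ := hσ hα hβ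
      have hpos := hH.pos_of_le (i := r) (j := i + 1) (by omega) (hαβ ▸ hi)
      by_cases hil : i ≤ β ℓ
      · have := h.descend_typeB (hH.antitone ℓ) hlr hβ i hil (by omega) hge
        rw [hH.base, hH.base] at this
        omega
      · rw [hH.eq_zero_of_lt (not_le.mp hil)] at hge
        omega
  · intro ℓ r i hlr hα hi hi1 ⟨hle, hge⟩
    obtain ⟨-, hαr, -, hσ⟩ := hext.2 ℓ r hlr
    rcases lt_or_ge (β ℓ) (β r) with hβ | hβ
    · by_cases hil : i ≤ β ℓ
      · exact h.typeB ℓ r i hlr hβ hil (by omega) ⟨hle, hge⟩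
      · have := hH.pos_of_le (i := r) (j := i + 1) (by omega) (by have := hαr hα hβ; omega)
        rw [hH.eq_zero_of_lt (not_le.mp hil)] at hle
        omega
    · obtain ⟨hαβ, hσ⟩ := hσ hα hβ
      rcases i with _ | i
      · rw [hH.base, hH.base] at hge
        omega
      · by_cases hir : i + 1 ≤ β r
        · have := h.descend_typeA (hH.antitone r) hlr hβ i hir hge
          rw [hH.base, hH.base] at this
          omega
        · have := hH.pos_of_le (i := ℓ) (j := i + 1) (by omega) (hαβ ▸ hi)
          rw [hH.eq_zero_of_lt (not_le.mp hir)] at hge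
          omega

end IsLoweredFilling

theorem Nat.pos_iff_le_findGreatest_of_antitone {f : ℕ → ℕ} (hf : Antitone f) {a : ℕ}
    (ha : ∀ j, a < j → f j = 0) {j : ℕ} (hj : 0 < j) :
    0 < f j ↔ j ≤ Nat.findGreatest (fun j => 0 < f j) a := by
  refine ⟨fun hpos => Nat.le_findGreatest (not_lt.mp fun h => by simp [ha j h] at hpos) hpos,
    fun hle => ?_⟩
  have hpos : 0 < f (Nat.findGreatest (fun j => 0 < f j) a) :=
    Nat.findGreatest_of_ne_zero (P := fun j => 0 < f j) rfl (by omega)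
  exact hpos.trans_le (hf hle)

theorem Nat.findGreatest_pos_eq {f : ℕ → ℕ} {a b : ℕ} (hb : b ≤ a)
    (h : ∀ j, 0 < j → (0 < f j ↔ j ≤ b)) : Nat.findGreatest (fun j => 0 < f j) a = b :=
  Nat.findGreatest_eq_iff.mpr ⟨hb, fun hb0 => (h b (by omega)).mpr le_rfl,
    fun _ hlt _ hpos => absurd ((h _ (by omega)).mp hpos) (by omega)⟩

section Lowering

variable {ι : Type*}

/-- Truncated subtraction: the cells holding `1` and the cells outside the diagram become `0`. -/
def lower (F : ι → ℕ → ℕ) : ι → ℕ → ℕ := fun i j => F i j - 1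

def raise (α : ι → ℕ) (H : ι → ℕ → ℕ) : ι → ℕ → ℕ :=
  fun i j => if j ≤ α i then H i j + 1 else 0

def supportShape (α : ι → ℕ) (H : ι → ℕ → ℕ) : ι → ℕ :=
  fun i => Nat.findGreatest (fun j => 0 < H i j) (α i)

theorem supportShape_le (α : ι → ℕ) (H : ι → ℕ → ℕ) (i : ι) : supportShape α H i ≤ α i :=
  Nat.findGreatest_le _

theorem lower_raise {α : ι → ℕ} {H : ι → ℕ → ℕ} (hH : ∀ i j, α i < j → H i j = 0) :
    lower (raise α H) = H := by
  funext i j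
  by_cases hj : j ≤ α i
  · simp [lower, raise, hj]
  · simp [lower, raise, hj, hH i j (by omega)]

theorem noInversionTriples_raise_iff [LT ι] {α : ι → ℕ} {H : ι → ℕ → ℕ} :
    NoInversionTriples α (raise α H) ↔ NoInversionTriples α H := by
  have h : ∀ i j, j ≤ α i → raise α H i j = H i j + 1 := fun i j hj => if_pos hj
  constructor
  · rintro ⟨hA, hB⟩
    refine ⟨fun ℓ r i hlr hα hi => ?_, fun ℓ r i hlr hα hi hi1 => ?_⟩
    · have := hA ℓ r i hlr hα hi
      rwa [h ℓ (i + 1) (by omega), h r (i + 1) hi, h ℓ i (by omega), add_le_add_iff_right,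
        add_le_add_iff_right] at this
    · have := hB ℓ r i hlr hα hi hi1
      rwa [h r (i + 1) hi1, h ℓ i hi, h r i (by omega), add_le_add_iff_right,
        add_le_add_iff_right] at this
  · rintro ⟨hA, hB⟩
    refine ⟨fun ℓ r i hlr hα hi => ?_, fun ℓ r i hlr hα hi hi1 => ?_⟩
    · rw [h ℓ (i + 1) (by omega), h r (i + 1) hi, h ℓ i (by omega), add_le_add_iff_right,
        add_le_add_iff_right]
      exact hA ℓ r i hlr hα hi
    · rw [h r (i + 1) hi1, h ℓ i hi, h r i (by omega), add_le_add_iff_right,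
        add_le_add_iff_right]
      exact hB ℓ r i hlr hα hi hi1

end Lowering

section SSAF

variable {m : ℕ} {α : Fin m → ℕ} {σ : Equiv.Perm (Fin m)} {F : Fin m → ℕ → ℕ}

theorem antitone_of_mem_ssafSet (hF : F ∈ SSAFSet m α σ) (i : Fin m) : Antitone (F i) := by
  refine antitone_nat_of_succ_le fun j => ?_
  by_cases hj : j + 1 ≤ α i
  · exact hF.1.2.2.1 i j hj
  · simp [hF.2 i (j + 1) (by omega)]

theorem raise_lower (hF : F ∈ SSAFSet m α σ) : raise α (lower F) = F := by
  funext i j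
  by_cases hj : j ≤ α i
  · have := hF.1.1 i j hj
    simp only [raise, lower, if_pos hj]
    omega
  · simp [raise, hj, hF.2 i j (by omega)]

theorem noInversionTriples_lower (hF : F ∈ SSAFSet m α σ) : NoInversionTriples α (lower F) := by
  rw [← noInversionTriples_raise_iff, raise_lower hF]
  exact ⟨hF.1.2.2.2.1, hF.1.2.2.2.2⟩

theorem isLoweredFilling_lower (hF : F ∈ SSAFSet m α σ) :
    IsLoweredFilling (supportShape α (lower F)) σ (lower F) where
  base i := by simp [lower, hF.1.2.1 i]
  antitone i := fun _ _ hjk => Nat.sub_le_sub_right (antitone_of_mem_ssafSet hF i hjk) 1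
  pos_iff i _ hj := Nat.pos_iff_le_findGreatest_of_antitone
    (fun _ _ hjk => Nat.sub_le_sub_right (antitone_of_mem_ssafSet hF i hjk) 1)
    (fun j hj => by simp [hF.2 i j hj]) hj

theorem sigmaExtendable_supportShape_lower (hF : F ∈ SSAFSet m α σ) :
    SigmaExtendable m σ (supportShape α (lower F)) α :=
  (isLoweredFilling_lower hF).sigmaExtendable (supportShape_le α _) (noInversionTriples_lower hF)

theorem raise_mem_ssafSet {H : Fin m → ℕ → ℕ} (hbase : ∀ i, H i 0 = σ i)
    (hanti : ∀ i, Antitone (H i)) (h : NoInversionTriples α H) :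
    raise α H ∈ SSAFSet m α σ := by
  have h' := noInversionTriples_raise_iff.mpr h
  refine ⟨⟨fun i j hj => ?_, fun i => ?_, fun i j hj => ?_, h'.typeA, h'.typeB⟩,
    fun i j hj => if_neg (by omega)⟩
  · simp [raise, hj]
  · simp [raise, hbase]
  · simp only [raise, if_pos hj, if_pos (show j ≤ α i by omega), add_le_add_iff_right]
    exact hanti i (Nat.le_succ j)

theorem IsLoweredFilling.supportShape_eq {β : Fin m → ℕ} {H : Fin m → ℕ → ℕ}
    (hH : IsLoweredFilling β σ H) (hβα : ∀ i, β i ≤ α i) : supportShape α H = β :=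
  funext fun i => Nat.findGreatest_pos_eq (hβα i) (hH.pos_iff i)

end SSAF

section Column

variable {n : ℕ} {σ : Equiv.Perm (Fin (n + 1))} {σ1 : Equiv.Perm (Fin n)} {p : Fin (n + 1)}
  {β₁ : Fin n → ℕ} {G : Fin n → ℕ → ℕ}

theorem IsLoweredFilling.removeNth_mem_ssafSet {β : Fin (n + 1) → ℕ} {H : Fin (n + 1) → ℕ → ℕ}
    (hσ1 : ∀ k, (σ1 k : ℕ) + 1 = σ (p.succAbove k)) (hH : IsLoweredFilling β σ H)
    (h : NoInversionTriples β H) : p.removeNth H ∈ SSAFSet n (p.removeNth β) σ1 := by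
  have h' := h.comp_strictMono p.strictMono_succAbove
  refine ⟨⟨fun k j hj => ?_, fun k => ?_, fun k j _ => hH.antitone _ (Nat.le_succ j),
    h'.typeA, h'.typeB⟩, fun k j hj => hH.eq_zero_of_lt hj⟩
  · rcases j with _ | j
    · simp [Fin.removeNth, hH.base, ← hσ1]
    · exact hH.pos_of_le (by omega) hj
  · simp [Fin.removeNth, hH.base, ← hσ1]

theorem insertNth_eq_zero_of_lt (hG : G ∈ SSAFSet n β₁ σ1) {i : Fin (n + 1)} {j : ℕ}
    (h : (p.insertNth 0 β₁ : Fin (n + 1) → ℕ) i < j) :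
    (p.insertNth 0 G : Fin (n + 1) → ℕ → ℕ) i j = 0 := by
  rcases p.eq_self_or_eq_succAbove i with rfl | ⟨k, rfl⟩
  · simp
  · simp only [Fin.insertNth_apply_succAbove] at h ⊢
    exact hG.2 k j h

theorem isLoweredFilling_insertNth (hp : (σ p : ℕ) = 0)
    (hσ1 : ∀ k, (σ1 k : ℕ) + 1 = σ (p.succAbove k)) (hG : G ∈ SSAFSet n β₁ σ1) :
    IsLoweredFilling (p.insertNth 0 β₁) σ (p.insertNth 0 G) where
  base i := by
    rcases p.eq_self_or_eq_succAbove i with rfl | ⟨k, rfl⟩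
    · simp [hp]
    · simp [hG.1.2.1 k, hσ1]
  antitone i := by
    rcases p.eq_self_or_eq_succAbove i with rfl | ⟨k, rfl⟩
    · simp only [Fin.insertNth_apply_same]
      exact fun _ _ _ => le_rfl
    · simpa using antitone_of_mem_ssafSet hG k
  pos_iff i j hj := by
    refine ⟨fun hpos => not_lt.mp fun h => by simp [insertNth_eq_zero_of_lt hG h] at hpos,
      fun hle => ?_⟩
    rcases p.eq_self_or_eq_succAbove i with rfl | ⟨k, rfl⟩
    · simp at hle
      omega
    · simp only [Fin.insertNth_apply_succAbove] at hle ⊢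
      exact hG.1.1 k j hle

theorem noInversionTriples_insertNth (hG : G ∈ SSAFSet n β₁ σ1) :
    NoInversionTriples (p.insertNth 0 β₁) (p.insertNth 0 G) := by
  constructor
  · intro ℓ r i hlr hβ hi
    rcases p.eq_self_or_eq_succAbove r with rfl | ⟨kr, rfl⟩
    · simp at hi
    rcases p.eq_self_or_eq_succAbove ℓ with rfl | ⟨kl, rfl⟩
    · simp only [Fin.insertNth_apply_same, Fin.insertNth_apply_succAbove] at hβ hi
      omega
    simp only [Fin.insertNth_apply_succAbove] at hβ hi ⊢
    exact hG.1.2.2.2.1 kl kr i (p.strictMono_succAbove.lt_iff_lt.mp hlr) hβ hi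
  · intro ℓ r i hlr hβ hi hi1
    rcases p.eq_self_or_eq_succAbove r with rfl | ⟨kr, rfl⟩
    · simp at hβ
    rcases p.eq_self_or_eq_succAbove ℓ with rfl | ⟨kl, rfl⟩
    · simp only [Fin.insertNth_apply_same, Fin.insertNth_apply_succAbove, nonpos_iff_eq_zero]
        at hi hi1 ⊢
      subst hi
      have := hG.1.1 kr 1 hi1
      simp
      omega
    simp only [Fin.insertNth_apply_succAbove] at hβ hi hi1 ⊢
    exact hG.1.2.2.2.2 kl kr i (p.strictMono_succAbove.lt_iff_lt.mp hlr) hβ hi hi1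

end Column

theorem ssafSet_finite (m : ℕ) (α : Fin m → ℕ) (σ : Equiv.Perm (Fin m)) :
    (SSAFSet m α σ).Finite := by
  let extend : (∀ i, Fin (α i + 1) → Fin (m + 1)) → Fin m → ℕ → ℕ :=
    fun g i j => if h : j ≤ α i then g i ⟨j, by omega⟩ else 0
  refine (Set.finite_range extend).subset fun F hF =>
    ⟨fun i j => ⟨F i j, ?_⟩, funext₂ fun i j => ?_⟩
  · have := antitone_of_mem_ssafSet hF i (Nat.zero_le j)
    have := hF.1.2.1 i
    have := (σ i).isLt
    omega
  · by_cases hj : j ≤ α i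
    · simp [extend, hj]
    · simp [extend, hj, hF.2 i j (by omega)]

theorem finite_setOf_sigmaExtendable_insertNth {n : ℕ} (p : Fin (n + 1))
    (σ : Equiv.Perm (Fin (n + 1))) (α : Fin (n + 1) → ℕ) :
    {β₁ : Fin n → ℕ | SigmaExtendable (n + 1) σ (p.insertNth 0 β₁) α}.Finite :=
  (Set.finite_Iic (p.removeNth α)).subset fun β₁ h k => by
    simpa [Fin.removeNth] using h.1 (p.succAbove k)

theorem prod_raise {ι M : Type*} [Fintype ι] [CommMonoid M] {α β : ι → ℕ}
    {H : ι → ℕ → ℕ} (hβα : ∀ i, β i ≤ α i) (hH : ∀ i j, β i < j → H i j = 0) (x : ℕ → M) :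
    ∏ i, ∏ j ∈ Finset.Icc 1 (α i), x (raise α H i j) =
      x 1 ^ (∑ i, α i - ∑ i, β i) * ∏ i, ∏ j ∈ Finset.Icc 1 (β i), x (H i j + 1) := by
  have hIcc (k : ℕ) : Finset.Icc 1 k = Finset.Ioc 0 k := Finset.Icc_add_one_left_eq_Ioc 0 k
  have hcol (i : ι) : ∏ j ∈ Finset.Icc 1 (α i), x (raise α H i j) =
      x 1 ^ (α i - β i) * ∏ j ∈ Finset.Icc 1 (β i), x (H i j + 1) := by
    rw [Finset.prod_congr rfl fun j hj => by rw [raise, if_pos (Finset.mem_Icc.mp hj).2],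
      hIcc, hIcc, ← Finset.prod_Ioc_consecutive _ (Nat.zero_le (β i)) (hβα i), mul_comm,
      Finset.prod_congr rfl fun j hj => by rw [hH i j (Finset.mem_Ioc.mp hj).1],
      Finset.prod_const, Nat.card_Ioc]
  rw [Finset.prod_congr rfl fun i _ => hcol i, Finset.prod_mul_distrib,
    Finset.prod_pow_eq_pow_sum, Finset.sum_tsub_distrib _ fun i _ => hβα i]

section Decomposition

variable {n : ℕ} {σ : Equiv.Perm (Fin (n + 1))} {σ1 : Equiv.Perm (Fin n)} {p : Fin (n + 1)}
  {α : Fin (n + 1) → ℕ}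

theorem prod_raise_insertNth {M : Type*} [CommMonoid M] {β₁ : Fin n → ℕ} {G : Fin n → ℕ → ℕ}
    (hβα : ∀ i, (p.insertNth 0 β₁ : Fin (n + 1) → ℕ) i ≤ α i) (hG : G ∈ SSAFSet n β₁ σ1)
    (x : ℕ → M) :
    ∏ i, ∏ j ∈ Finset.Icc 1 (α i), x (raise α (p.insertNth 0 G) i j) =
      x 1 ^ (∑ i, α i - ∑ k, β₁ k) * ∏ k, ∏ j ∈ Finset.Icc 1 (β₁ k), x (G k j + 1) := by
  rw [prod_raise hβα (fun i j => insertNth_eq_zero_of_lt hG) x, Fin.sum_insertNth, zero_add,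
    Fin.prod_univ_succAbove _ p]
  simp

theorem sigmaExtendable_insertNth_removeNth (hp : (σ p : ℕ) = 0) {F : Fin (n + 1) → ℕ → ℕ}
    (hF : F ∈ SSAFSet (n + 1) α σ) :
    SigmaExtendable (n + 1) σ (p.insertNth 0 (p.removeNth (supportShape α (lower F)))) α := by
  rw [Fin.insertNth_removeNth, ← (isLoweredFilling_lower hF).shape_eq_zero hp,
    Function.update_eq_self]
  exact sigmaExtendable_supportShape_lower hF

theorem removeNth_lower_mem_ssafSet (hσ1 : ∀ k, (σ1 k : ℕ) + 1 = σ (p.succAbove k))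
    {F : Fin (n + 1) → ℕ → ℕ} (hF : F ∈ SSAFSet (n + 1) α σ) :
    p.removeNth (lower F) ∈ SSAFSet n (p.removeNth (supportShape α (lower F))) σ1 :=
  have hH := isLoweredFilling_lower hF
  hH.removeNth_mem_ssafSet hσ1 <|
    hH.noInversionTriples_of_outer (sigmaExtendable_supportShape_lower hF)
      (noInversionTriples_lower hF)

theorem raise_insertNth_removeNth_lower (hp : (σ p : ℕ) = 0) {F : Fin (n + 1) → ℕ → ℕ}
    (hF : F ∈ SSAFSet (n + 1) α σ) : raise α (p.insertNth 0 (p.removeNth (lower F))) = F := by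
  rw [Fin.insertNth_removeNth, ← (isLoweredFilling_lower hF).apply_eq_zero hp,
    Function.update_eq_self, raise_lower hF]

variable {β₁ : Fin n → ℕ} {G : Fin n → ℕ → ℕ}

theorem raise_insertNth_mem_ssafSet (hp : (σ p : ℕ) = 0)
    (hσ1 : ∀ k, (σ1 k : ℕ) + 1 = σ (p.succAbove k))
    (hext : SigmaExtendable (n + 1) σ (p.insertNth 0 β₁) α) (hG : G ∈ SSAFSet n β₁ σ1) :
    raise α (p.insertNth 0 G) ∈ SSAFSet (n + 1) α σ :=
  have hH := isLoweredFilling_insertNth hp hσ1 hG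
  raise_mem_ssafSet hH.base hH.antitone <|
    hH.noInversionTriples_of_inner hext (noInversionTriples_insertNth hG)

theorem removeNth_supportShape_lower_raise_insertNth (hp : (σ p : ℕ) = 0)
    (hσ1 : ∀ k, (σ1 k : ℕ) + 1 = σ (p.succAbove k))
    (hext : SigmaExtendable (n + 1) σ (p.insertNth 0 β₁) α) (hG : G ∈ SSAFSet n β₁ σ1) :
    p.removeNth (supportShape α (lower (raise α (p.insertNth 0 G)))) = β₁ ∧
      p.removeNth (lower (raise α (p.insertNth 0 G))) = G := by
  rw [lower_raise fun i j h => insertNth_eq_zero_of_lt hG ((hext.1 i).trans_lt h),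
    (isLoweredFilling_insertNth hp hσ1 hG).supportShape_eq hext.1]
  exact ⟨Fin.removeNth_insertNth _ _ _, Fin.removeNth_insertNth _ _ _⟩

end Decomposition

theorem stmt13 (n : ℕ) (σ : Equiv.Perm (Fin (n + 1))) (α : Fin (n + 1) → ℕ)
    (σ1 : Equiv.Perm (Fin n))
    (hσ1 : ∀ i : Fin n, (σ1 i : ℕ) + 1 = ((σ ((σ⁻¹ 0).succAbove i)) : ℕ))
    (x : ℕ → ℝ) :
    atomSum (n + 1) α σ x =
      ∑ᶠ β₁ ∈ {β₁ : Fin n → ℕ |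
          SigmaExtendable (n + 1) σ ((σ⁻¹ 0).insertNth 0 β₁) α},
        (x 1) ^ ((∑ i, α i) - ∑ i, β₁ i) *
          atomSum n β₁ σ1 (fun j => x (j + 1)) := by
  classical
  have hp : (σ (σ⁻¹ 0) : ℕ) = 0 := by simp
  unfold atomSum
  rw [finsum_mem_eq_finite_toFinset_sum _ (ssafSet_finite (n + 1) α σ),
    finsum_mem_eq_finite_toFinset_sum _ (finite_setOf_sigmaExtendable_insertNth (σ⁻¹ 0) σ α)]
  simp_rw [finsum_mem_eq_finite_toFinset_sum _ (ssafSet_finite n _ σ1), Finset.mul_sum]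
  rw [Finset.sum_sigma']
  symm
  refine Finset.sum_nbij' (fun q => raise α ((σ⁻¹ 0).insertNth 0 q.2))
    (fun F => ⟨(σ⁻¹ 0).removeNth (supportShape α (lower F)), (σ⁻¹ 0).removeNth (lower F)⟩)
    ?_ ?_ ?_ ?_ ?_ <;> simp only [Finset.mem_sigma, Set.Finite.mem_toFinset]
  · exact fun q hq => raise_insertNth_mem_ssafSet hp hσ1 hq.1 hq.2
  · exact fun F hF =>
      ⟨sigmaExtendable_insertNth_removeNth hp hF, removeNth_lower_mem_ssafSet hσ1 hF⟩
  · rintro ⟨β₁, G⟩ ⟨hext, hG⟩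
    obtain ⟨hβ, hG'⟩ := removeNth_supportShape_lower_raise_insertNth hp hσ1 hext hG
    exact Sigma.ext hβ (heq_of_eq hG')
  · exact fun F hF => raise_insertNth_removeNth_lower hp hF
  · exact fun q hq => (prod_raise_insertNth hq.1.1 hq.2 x).symm
end
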